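/- Sufficiency direction of Lemma 2: Let {Π_m}_{m=1}^M be a POVM with rank-one operators on H. If there exist c_m ∈ [0,1] with Σ_m c_m Π_m = Z_0 = P(|0⟩⟨0|_A ⊗ I_B)P, then setting Φ_m^{(0)} = c_m T_0 Π_m T_0† and Φ_m^{(1)} = (1−c_m) T_1 Π_m T_1† defines POVMs on H_B^{(0)} and H_B^{(1)} respectively, satisfying Π_m = P(|0⟩⟨0|_A ⊗ Φ_m^{(0)} + |1⟩⟨1|_A ⊗ Φ_m^{(1)})P for all m. -/

import Mathlib

noncomputable section
open scoped InnerProductSpace ComplexConjugate ComplexOrder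

variable {E F : Type*} [NormedAddCommGroup E] [InnerProductSpace ℂ E]
  [NormedAddCommGroup F] [InnerProductSpace ℂ F]

/-- rank-one operator |x⟩⟨y| : E → F -/
def rankOne (x : F) (y : E) : E →ₗ[ℂ] F where
  toFun z := ⟪y, z⟫_ℂ • x
  map_add' a b := by simp [inner_add_right, add_smul]
  map_smul' c a := by simp [inner_smul_right, smul_smul]

/-- positive semidefinite operator (using the complex partial order) -/
def IsPSD {E : Type*} [NormedAddCommGroup E] [InnerProductSpace ℂ E]
    (T : E →ₗ[ℂ] E) : Prop := ∀ x : E, 0 ≤ ⟪x, T x⟫_ℂ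

/-- simple tensor v ⊗ b in ℂⁿ ⊗ H_B, modeled as `PiLp 2` -/
def tp {n : ℕ} {HB : Type*} [NormedAddCommGroup HB] [InnerProductSpace ℂ HB]
    (v : EuclideanSpace ℂ (Fin n)) (b : HB) : PiLp 2 (fun _ : Fin n => HB) :=
  (WithLp.equiv 2 _).symm fun i => v i • b

/-- operator tensor M ⊗ X on ℂⁿ ⊗ H_B, where M is a matrix on ℂⁿ -/
def opT {n : ℕ} {HB : Type*} [NormedAddCommGroup HB] [InnerProductSpace ℂ HB]
    (M : Matrix (Fin n) (Fin n) ℂ) (X : HB →ₗ[ℂ] HB) :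
    PiLp 2 (fun _ : Fin n => HB) →ₗ[ℂ] PiLp 2 (fun _ : Fin n => HB) where
  toFun f := (WithLp.equiv 2 _).symm fun i => ∑ j, M i j • X (f j)
  map_add' f g := by
    ext i
    simp only [WithLp.equiv_symm_apply, WithLp.ofLp_toLp, PiLp.add_apply, map_add, smul_add]
    exact Finset.sum_add_distrib
  map_smul' c f := by
    ext i
    simp only [WithLp.equiv_symm_apply, WithLp.ofLp_toLp, PiLp.smul_apply, map_smul, RingHom.id_apply,
      Finset.smul_sum]
    exact Finset.sum_congr rfl fun j _ => (smul_comm _ _ _)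

/-- outer product matrix |v⟩⟨v| -/
def outerM {n : ℕ} (v : EuclideanSpace ℂ (Fin n)) : Matrix (Fin n) (Fin n) ℂ :=
  fun i j => v i * conj (v j)

/-- orthogonal projection onto a subspace, as an operator -/
def projOp {E : Type*} [NormedAddCommGroup E] [InnerProductSpace ℂ E]
    [FiniteDimensional ℂ E] (K : Submodule ℂ E) : E →ₗ[ℂ] E :=
  (K.subtypeL.comp K.orthogonalProjectionOnto).toLinearMap

/-!
Write `P = |π⟩⟨π| + |π⊥⟩⟨π⊥|` and `Π_m = |x_m⟩⟨x_m|` with `x_m ∈ span {π, π⊥}`.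
Compressing `|k⟩⟨k| ⊗ I` by `P` gives `Z_k = ‖η_k‖² |π⟩⟨π| + ‖ν_k‖² |π⊥⟩⟨π⊥|`, and
`Z_0 + Z_1 = P = Σ Π_m`, so the weights `c_m⁽⁰⁾ = c_m`, `c_m⁽¹⁾ = 1 - c_m` satisfy
`Σ c_m⁽ᵏ⁾ Π_m = Z_k`. Conjugating by `T_k`, which sends `π ↦ η_k⁻ η_k` and `π⊥ ↦ ν_k⁻ ν_k`,
turns `Z_k` into the projection onto `span {η_k, ν_k}`: the `Φ⁽ᵏ⁾` are POVMs. For the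
realization, `T_k Π_m T_k†` is rank one on `T_k x_m`, and `P (|k⟩ ⊗ T_k x_m) = x_m` unless `η_k`
or `ν_k` vanishes; then `Z_k` annihilates `π` or `π⊥`, and positivity of `Σ c_m⁽ᵏ⁾ Π_m` forces
`c_m⁽ᵏ⁾ ⟨x_m, π⟩ = 0` (resp. `π⊥`), so the weighted term is unaffected. Summing over `k` with
`c_m + (1 - c_m) = 1` recovers `Π_m`.
-/

section RankOne

variable {G : Type*} [NormedAddCommGroup G] [InnerProductSpace ℂ G]

@[simp] lemma rankOne_apply (x : F) (y z : E) : rankOne x y z = ⟪y, z⟫_ℂ • x := rfl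

lemma comp_rankOne (A : F →ₗ[ℂ] G) (x : F) (y : E) : A ∘ₗ rankOne x y = rankOne (A x) y := by
  ext z; simp

lemma rankOne_comp_adjoint [FiniteDimensional ℂ E] [FiniteDimensional ℂ G]
    (B : E →ₗ[ℂ] G) (x : F) (y : E) :
    rankOne x y ∘ₗ LinearMap.adjoint B = rankOne x (B y) := by
  ext z; simp [LinearMap.adjoint_inner_right]

lemma comp_rankOne_comp_adjoint [FiniteDimensional ℂ E] [FiniteDimensional ℂ F]
    (A : E →ₗ[ℂ] F) (x y : E) :
    A ∘ₗ rankOne x y ∘ₗ LinearMap.adjoint A = rankOne (A x) (A y) := by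
  rw [← LinearMap.comp_assoc, comp_rankOne, rankOne_comp_adjoint]

lemma adjoint_rankOne [FiniteDimensional ℂ E] [FiniteDimensional ℂ F] (x : F) (y : E) :
    LinearMap.adjoint (rankOne x y) = rankOne y x := by
  symm
  rw [LinearMap.eq_adjoint_iff]
  intro u v
  simp [inner_smul_left, inner_smul_right, mul_comm]

lemma rankOne_comp_comp_rankOne (X : F →ₗ[ℂ] G) (a : E) (b : G) (c : F) (d : E) :
    rankOne a b ∘ₗ X ∘ₗ rankOne c d = ⟪b, X c⟫_ℂ • rankOne a d := by
  ext z; simp [smul_smul, mul_comm]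

lemma rankOne_smul_smul (r s : ℂ) (x : F) (y : E) :
    rankOne (r • x) (s • y) = (r * conj s) • rankOne x y := by
  ext z; simp [smul_smul, mul_comm, mul_left_comm]

lemma isPSD_ofReal_smul_rankOne_self {r : ℝ} (hr : 0 ≤ r) (x : E) :
    IsPSD ((r : ℂ) • rankOne x x) := by
  intro z
  simp only [LinearMap.smul_apply, rankOne_apply, inner_smul_right, ← inner_conj_symm x z,
    ← Complex.normSq_eq_conj_mul_self]
  exact_mod_cast mul_nonneg hr (Complex.normSq_nonneg _)

lemma eq_zero_or_inner_eq_zero_of_inner_sum_rankOne {ι : Type*} [Fintype ι] {d : ι → ℝ}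
    (hd : ∀ i, 0 ≤ d i) (x : ι → E) {v : E}
    (h : ⟪v, (∑ i, (d i : ℂ) • rankOne (x i) (x i)) v⟫_ℂ = 0) (i : ι) :
    d i = 0 ∨ ⟪x i, v⟫_ℂ = 0 := by
  have hterm : ∀ j, ⟪v, ((d j : ℂ) • rankOne (x j) (x j)) v⟫_ℂ =
      ((d j * Complex.normSq ⟪x j, v⟫_ℂ : ℝ) : ℂ) := fun j => by
    simp only [LinearMap.smul_apply, rankOne_apply, inner_smul_right, ← inner_conj_symm (x j) v,
      Complex.ofReal_mul, Complex.normSq_eq_conj_mul_self, Complex.conj_conj]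
    ring
  simp only [LinearMap.sum_apply, inner_sum, hterm, ← Complex.ofReal_sum,
    Complex.ofReal_eq_zero] at h
  have := (Finset.sum_eq_zero_iff_of_nonneg fun j _ =>
    mul_nonneg (hd j) (Complex.normSq_nonneg _)).mp h i (Finset.mem_univ i)
  simpa using this

lemma sum_smul_comp_comp {ι : Type*} (s : Finset ι) (a : ι → ℂ) (A : F →ₗ[ℂ] G)
    (R : ι → F →ₗ[ℂ] F) (B : E →ₗ[ℂ] F) :
    ∑ i ∈ s, a i • (A ∘ₗ R i ∘ₗ B) = A ∘ₗ (∑ i ∈ s, a i • R i) ∘ₗ B := by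
  ext z; simp [map_sum]

lemma comp_add_comp (A : F →ₗ[ℂ] G) (X Y : F →ₗ[ℂ] F) (B : E →ₗ[ℂ] F) :
    A ∘ₗ (X + Y) ∘ₗ B = A ∘ₗ X ∘ₗ B + A ∘ₗ Y ∘ₗ B := by
  rw [LinearMap.add_comp, LinearMap.comp_add]

end RankOne

lemma Orthonormal.inner_pair {p q : E} (h : Orthonormal ℂ ![p, q]) :
    ⟪p, p⟫_ℂ = 1 ∧ ⟪p, q⟫_ℂ = 0 ∧ ⟪q, p⟫_ℂ = 0 ∧ ⟪q, q⟫_ℂ = 1 := by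
  have h' := orthonormal_iff_ite.mp h
  exact ⟨by simpa using h' 0 0, by simpa using h' 0 1, by simpa using h' 1 0, by simpa using h' 1 1⟩

lemma inner_smul_add_inner_smul_of_mem_span_pair {p q x : E} (h : Orthonormal ℂ ![p, q])
    (hx : x ∈ Submodule.span ℂ {p, q}) : ⟪p, x⟫_ℂ • p + ⟪q, x⟫_ℂ • q = x := by
  obtain ⟨hpp, hpq, hqp, hqq⟩ := h.inner_pair
  obtain ⟨a, b, rfl⟩ := Submodule.mem_span_pair.mp hx
  simp only [inner_add_right, inner_smul_right, hpp, hpq, hqp, hqq]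
  simp

lemma inner_self_eq_ofReal_norm_sq (u : E) : ⟪u, u⟫_ℂ = ((‖u‖ ^ 2 : ℝ) : ℂ) := by
  rw [inner_self_eq_norm_sq_to_K]
  norm_cast

lemma ofReal_inv_norm_sq_mul_inner_self_mul {u : E} {z : ℂ} (hz : u = 0 → z = 0) :
    (((‖u‖ ^ 2)⁻¹ : ℝ) : ℂ) * ⟪u, u⟫_ℂ * z = z := by
  rcases eq_or_ne u 0 with hu | hu
  · simp [hz hu]
  · rw [inner_self_eq_ofReal_norm_sq, ← Complex.ofReal_mul, inv_mul_cancel₀ (by simpa using hu),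
      Complex.ofReal_one, one_mul]

lemma projOp_span_pair_of_inner_eq_zero [FiniteDimensional ℂ E] {u v : E} (h : ⟪u, v⟫_ℂ = 0) :
    projOp (Submodule.span ℂ {u, v}) =
      (((‖u‖ ^ 2)⁻¹ : ℝ) : ℂ) • rankOne u u + (((‖v‖ ^ 2)⁻¹ : ℝ) : ℂ) • rankOne v v := by
  have h' : ⟪v, u⟫_ℂ = 0 := inner_eq_zero_symm.mp h
  ext y
  refine Submodule.eq_starProjection_of_mem_of_inner_eq_zero ?_ fun w hw => ?_
  · exact Submodule.add_mem _ (Submodule.smul_mem _ _ (Submodule.smul_mem _ _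
      (Submodule.subset_span (by simp)))) (Submodule.smul_mem _ _ (Submodule.smul_mem _ _
      (Submodule.subset_span (by simp))))
  · obtain ⟨a, b, rfl⟩ := Submodule.mem_span_pair.mp hw
    have hu := ofReal_inv_norm_sq_mul_inner_self_mul (u := u) (z := ⟪u, y⟫_ℂ) fun hu => by simp [hu]
    have hv := ofReal_inv_norm_sq_mul_inner_self_mul (u := v) (z := ⟪v, y⟫_ℂ) fun hv => by simp [hv]
    rw [inner_eq_zero_symm]
    simp only [LinearMap.add_apply, LinearMap.smul_apply, rankOne_apply, inner_add_left,
      inner_smul_left, inner_sub_right, inner_add_right, inner_smul_right, h, h']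
    linear_combination (-(starRingEnd ℂ) a) * hu - (starRingEnd ℂ) b * hv

section PairOp

variable {u v : F} {p q : E}

/-- The paper's `T_k = η_k⁻|η_k⟩⟨π| + ν_k⁻|ν_k⟩⟨π⊥|`; the generalized inverse `x⁻` is Lean's `x⁻¹`,
since `(0 : ℝ)⁻¹ = 0`. -/
def pairOp (u v : F) (p q : E) : E →ₗ[ℂ] F :=
  (((‖u‖ ^ 2)⁻¹ : ℝ) : ℂ) • rankOne u p + (((‖v‖ ^ 2)⁻¹ : ℝ) : ℂ) • rankOne v q

lemma pairOp_def (u v : F) (p q : E) : pairOp u v p q =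
    (((‖u‖ ^ 2)⁻¹ : ℝ) : ℂ) • rankOne u p + (((‖v‖ ^ 2)⁻¹ : ℝ) : ℂ) • rankOne v q := rfl

lemma pairOp_comm : pairOp u v p q = pairOp v u q p := add_comm _ _

lemma range_pairOp_le : LinearMap.range (pairOp u v p q) ≤ Submodule.span ℂ {u, v} := by
  rintro _ ⟨y, rfl⟩
  exact Submodule.add_mem _
    (Submodule.smul_mem _ _ (Submodule.smul_mem _ _ (Submodule.subset_span (by simp))))
    (Submodule.smul_mem _ _ (Submodule.smul_mem _ _ (Submodule.subset_span (by simp))))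

lemma inner_pairOp_apply (h : ⟪u, v⟫_ℂ = 0) {y : E} (hy : u = 0 → ⟪p, y⟫_ℂ = 0) :
    ⟪u, pairOp u v p q y⟫_ℂ = ⟪p, y⟫_ℂ := by
  simp only [pairOp, LinearMap.add_apply, LinearMap.smul_apply, rankOne_apply, inner_add_right,
    inner_smul_right, h, mul_zero, add_zero]
  linear_combination ofReal_inv_norm_sq_mul_inner_self_mul hy

lemma pairOp_apply_left (hpq : Orthonormal ℂ ![p, q]) :
    pairOp u v p q p = (((‖u‖ ^ 2)⁻¹ : ℝ) : ℂ) • u := by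
  obtain ⟨hpp, -, hqp, -⟩ := hpq.inner_pair
  simp only [pairOp, LinearMap.add_apply, LinearMap.smul_apply, rankOne_apply, hpp, hqp, one_smul,
    zero_smul, smul_zero, add_zero]

lemma pairOp_comp_comp_adjoint [FiniteDimensional ℂ E] [FiniteDimensional ℂ F]
    (h : ⟪u, v⟫_ℂ = 0) (hpq : Orthonormal ℂ ![p, q]) :
    pairOp u v p q ∘ₗ (((‖u‖ ^ 2 : ℝ) : ℂ) • rankOne p p + ((‖v‖ ^ 2 : ℝ) : ℂ) • rankOne q q) ∘ₗ
      LinearMap.adjoint (pairOp u v p q) = projOp (Submodule.span ℂ {u, v}) := by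
  have hqp : Orthonormal ℂ ![q, p] := by
    simpa [orthonormal_vecCons_iff, inner_eq_zero_symm, and_comm, and_assoc, and_left_comm]
      using hpq
  have key : ∀ r : ℝ, r * (r⁻¹ * r⁻¹) = r⁻¹ := fun r => by
    rcases eq_or_ne r 0 with rfl | hr
    · simp
    · field_simp
  rw [projOp_span_pair_of_inner_eq_zero h, LinearMap.add_comp, LinearMap.comp_add,
    LinearMap.smul_comp, LinearMap.comp_smul, LinearMap.smul_comp, LinearMap.comp_smul,
    comp_rankOne_comp_adjoint, comp_rankOne_comp_adjoint, pairOp_apply_left hpq, pairOp_comm,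
    pairOp_apply_left hqp, rankOne_smul_smul, rankOne_smul_smul, smul_smul, smul_smul]
  simp only [Complex.conj_ofReal, ← Complex.ofReal_mul, key]

end PairOp

section Tensor

variable {n : ℕ} {HB : Type*} [NormedAddCommGroup HB] [InnerProductSpace ℂ HB]

lemma inner_tp (v w : EuclideanSpace ℂ (Fin n)) (b c : HB) :
    ⟪tp v b, tp w c⟫_ℂ = ⟪v, w⟫_ℂ * ⟪b, c⟫_ℂ := by
  simp only [tp, PiLp.inner_apply, WithLp.equiv_symm_apply, inner_smul_left, inner_smul_right,
    Finset.sum_mul]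
  exact Finset.sum_congr rfl fun j _ => by simp [RCLike.inner_apply]; ring

lemma opT_smul (A : Matrix (Fin n) (Fin n) ℂ) (a : ℂ) (X : HB →ₗ[ℂ] HB) :
    opT A (a • X) = a • opT A X := by
  ext f i
  simp [opT, Finset.smul_sum, smul_comm a]

lemma opT_outerM_rankOne (w : EuclideanSpace ℂ (Fin n)) (a b : HB) :
    opT (outerM w) (rankOne a b) = rankOne (tp w a) (tp w b) := by
  ext f i
  simp only [opT, outerM, tp, LinearMap.coe_mk, AddHom.coe_mk, WithLp.equiv_symm_apply,
    PiLp.toLp_apply, PiLp.smul_apply, rankOne_apply, PiLp.inner_apply, inner_smul_left, smul_smul,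
    ← Finset.sum_smul, Finset.sum_mul]
  exact congrArg (· • a) (Finset.sum_congr rfl fun j _ => by ring)

lemma opT_outerM_tp (w v : EuclideanSpace ℂ (Fin n)) (X : HB →ₗ[ℂ] HB) (b : HB) :
    opT (outerM w) X (tp v b) = ⟪w, v⟫_ℂ • tp w (X b) := by
  ext i
  simp only [opT, outerM, tp, LinearMap.coe_mk, AddHom.coe_mk, WithLp.equiv_symm_apply,
    PiLp.toLp_apply, PiLp.smul_apply, map_smul, EuclideanSpace.inner_eq_star_dotProduct, smul_smul,
    ← Finset.sum_smul]
  congr 1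
  simp only [dotProduct, Finset.sum_mul]
  exact Finset.sum_congr rfl fun j _ => by simp; ring

variable {ι : Type*} [Fintype ι] [DecidableEq ι] {e : ι → EuclideanSpace ℂ (Fin n)}

lemma inner_sum_tp_tp (he : Orthonormal ℂ e) (u : ι → HB) (k : ι) (b : HB) :
    ⟪∑ i, tp (e i) (u i), tp (e k) b⟫_ℂ = ⟪u k, b⟫_ℂ := by
  simp [inner_tp, orthonormal_iff_ite.mp he]

lemma inner_sum_tp_sum_tp (he : Orthonormal ℂ e) (u v : ι → HB) :
    ⟪∑ i, tp (e i) (u i), ∑ i, tp (e i) (v i)⟫_ℂ = ∑ i, ⟪u i, v i⟫_ℂ := by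
  simp [inner_sum_tp_tp he]

lemma opT_outerM_sum_tp (he : Orthonormal ℂ e) (X : HB →ₗ[ℂ] HB) (u : ι → HB) (k : ι) :
    opT (outerM (e k)) X (∑ i, tp (e i) (u i)) = tp (e k) (X (u k)) := by
  simp [map_sum, opT_outerM_tp, orthonormal_iff_ite.mp he]

end Tensor

section Lemma2

variable {HB : Type*} [NormedAddCommGroup HB] [InnerProductSpace ℂ HB] {n : ℕ}
  {ι : Type*} [Fintype ι] [DecidableEq ι] {e : ι → EuclideanSpace ℂ (Fin n)} {η ν : ι → HB}
  {pi pip : PiLp 2 (fun _ : Fin n => HB)}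

lemma proj_comp_opT_outerM_id_comp_proj (he : Orthonormal ℂ e)
    (hpi : pi = ∑ i, tp (e i) (η i)) (hpip : pip = ∑ i, tp (e i) (ν i)) {k : ι}
    (horth : ⟪η k, ν k⟫_ℂ = 0) :
    (rankOne pi pi + rankOne pip pip) ∘ₗ opT (outerM (e k)) LinearMap.id ∘ₗ
        (rankOne pi pi + rankOne pip pip) =
      ((‖η k‖ ^ 2 : ℝ) : ℂ) • rankOne pi pi + ((‖ν k‖ ^ 2 : ℝ) : ℂ) • rankOne pip pip := by
  have horth' : ⟪ν k, η k⟫_ℂ = 0 := inner_eq_zero_symm.mp horth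
  subst hpi hpip
  simp only [LinearMap.comp_add, LinearMap.add_comp, rankOne_comp_comp_rankOne,
    opT_outerM_sum_tp he, LinearMap.id_apply, inner_sum_tp_tp he, horth, horth',
    ← inner_self_eq_ofReal_norm_sq, zero_smul, add_zero, zero_add]

lemma sum_smul_rankOne_norm_sq_eq_proj (he : Orthonormal ℂ e) (hON : Orthonormal ℂ ![pi, pip])
    (hpi : pi = ∑ i, tp (e i) (η i)) (hpip : pip = ∑ i, tp (e i) (ν i)) :
    ∑ k, (((‖η k‖ ^ 2 : ℝ) : ℂ) • rankOne pi pi + ((‖ν k‖ ^ 2 : ℝ) : ℂ) • rankOne pip pip) =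
      rankOne pi pi + rankOne pip pip := by
  obtain ⟨hpp, -, -, hqq⟩ := hON.inner_pair
  rw [Finset.sum_add_distrib, ← Finset.sum_smul, ← Finset.sum_smul]
  simp only [← inner_self_eq_ofReal_norm_sq, ← inner_sum_tp_sum_tp he, ← hpi, ← hpip, hpp, hqq,
    one_smul]

lemma proj_tp_pairOp_apply (he : Orthonormal ℂ e) (hON : Orthonormal ℂ ![pi, pip])
    (hpi : pi = ∑ i, tp (e i) (η i)) (hpip : pip = ∑ i, tp (e i) (ν i)) {k : ι}
    (horth : ⟪η k, ν k⟫_ℂ = 0) {x : PiLp 2 (fun _ : Fin n => HB)}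
    (hx : x ∈ Submodule.span ℂ {pi, pip}) (hη : η k = 0 → ⟪pi, x⟫_ℂ = 0)
    (hν : ν k = 0 → ⟪pip, x⟫_ℂ = 0) :
    (rankOne pi pi + rankOne pip pip) (tp (e k) (pairOp (η k) (ν k) pi pip x)) = x := by
  have hpi_tp : ∀ b, ⟪pi, tp (e k) b⟫_ℂ = ⟪η k, b⟫_ℂ := by subst hpi; exact inner_sum_tp_tp he η k
  have hpip_tp : ∀ b, ⟪pip, tp (e k) b⟫_ℂ = ⟪ν k, b⟫_ℂ := by
    subst hpip; exact inner_sum_tp_tp he ν k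
  rw [LinearMap.add_apply, rankOne_apply, rankOne_apply, hpi_tp, hpip_tp,
    inner_pairOp_apply horth hη, pairOp_comm, inner_pairOp_apply (inner_eq_zero_symm.mp horth) hν]
  exact inner_smul_add_inner_smul_of_mem_span_pair hON hx

lemma proj_comp_opT_outerM_comp_proj [FiniteDimensional ℂ HB] (he : Orthonormal ℂ e)
    (hON : Orthonormal ℂ ![pi, pip]) (hpi : pi = ∑ i, tp (e i) (η i))
    (hpip : pip = ∑ i, tp (e i) (ν i)) {k : ι} (horth : ⟪η k, ν k⟫_ℂ = 0) {κ : Type*}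
    [Fintype κ] {x : κ → PiLp 2 (fun _ : Fin n => HB)}
    (hx : ∀ m, x m ∈ Submodule.span ℂ {pi, pip}) {a : κ → ℝ} (ha : ∀ m, 0 ≤ a m)
    (hZ : ∑ m, (a m : ℂ) • rankOne (x m) (x m) =
      ((‖η k‖ ^ 2 : ℝ) : ℂ) • rankOne pi pi + ((‖ν k‖ ^ 2 : ℝ) : ℂ) • rankOne pip pip) (m : κ) :
    (rankOne pi pi + rankOne pip pip) ∘ₗ
        opT (outerM (e k)) ((a m : ℂ) • (pairOp (η k) (ν k) pi pip ∘ₗ rankOne (x m) (x m) ∘ₗ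
          LinearMap.adjoint (pairOp (η k) (ν k) pi pip))) ∘ₗ
        (rankOne pi pi + rankOne pip pip) =
      (a m : ℂ) • rankOne (x m) (x m) := by
  rw [comp_rankOne_comp_adjoint, opT_smul, LinearMap.smul_comp, LinearMap.comp_smul]
  rcases eq_or_ne (a m) 0 with ham | ham
  · simp [ham]
  -- If `η k = 0` then `Z_k` kills `π`, so positivity forces `⟪x m, π⟫ = 0` as `a m ≠ 0`;
  -- likewise for `ν k` and `π⊥`.
  obtain ⟨-, hppip, hpipp, -⟩ := hON.inner_pair
  have hη : η k = 0 → ⟪pi, x m⟫_ℂ = 0 := fun h0 => by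
    have := eq_zero_or_inner_eq_zero_of_inner_sum_rankOne ha x (v := pi)
      (by rw [hZ]; simp [hpipp, h0]) m
    exact inner_eq_zero_symm.mp (this.resolve_left ham)
  have hν : ν k = 0 → ⟪pip, x m⟫_ℂ = 0 := fun h0 => by
    have := eq_zero_or_inner_eq_zero_of_inner_sum_rankOne ha x (v := pip)
      (by rw [hZ]; simp [hppip, h0]) m
    exact inner_eq_zero_symm.mp (this.resolve_left ham)
  have hP := comp_rankOne_comp_adjoint (rankOne pi pi + rankOne pip pip)
    (tp (e k) (pairOp (η k) (ν k) pi pip (x m))) (tp (e k) (pairOp (η k) (ν k) pi pip (x m)))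
  rw [map_add, adjoint_rankOne, adjoint_rankOne] at hP
  rw [opT_outerM_rankOne, hP, proj_tp_pairOp_apply he hON hpi hpip horth (hx m) hη hν]

lemma sum_one_sub_smul_rankOne_eq {e : Fin 2 → EuclideanSpace ℂ (Fin n)} {η ν : Fin 2 → HB}
    (he : Orthonormal ℂ e) (hON : Orthonormal ℂ ![pi, pip]) (hpi : pi = ∑ i, tp (e i) (η i))
    (hpip : pip = ∑ i, tp (e i) (ν i)) {κ : Type*} [Fintype κ]
    {x : κ → PiLp 2 (fun _ : Fin n => HB)} {c : κ → ℝ}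
    (hsum : ∑ m, rankOne (x m) (x m) = rankOne pi pi + rankOne pip pip)
    (hZ : ∑ m, (c m : ℂ) • rankOne (x m) (x m) =
      ((‖η 0‖ ^ 2 : ℝ) : ℂ) • rankOne pi pi + ((‖ν 0‖ ^ 2 : ℝ) : ℂ) • rankOne pip pip) :
    ∑ m, ((1 - c m : ℝ) : ℂ) • rankOne (x m) (x m) =
      ((‖η 1‖ ^ 2 : ℝ) : ℂ) • rankOne pi pi + ((‖ν 1‖ ^ 2 : ℝ) : ℂ) • rankOne pip pip := by
  have hP := sum_smul_rankOne_norm_sq_eq_proj he hON hpi hpip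
  rw [Fin.sum_univ_two] at hP
  simp only [Complex.ofReal_sub, Complex.ofReal_one, sub_smul, one_smul, Finset.sum_sub_distrib,
    hsum, hZ, ← hP, add_sub_cancel_left]

end Lemma2

/-- sufficiency direction of Lemma 2: if c_m ∈ [0,1] satisfy
Σ c_m Π_m = Z_0 = P(|0⟩⟨0|⊗I_B)P, then Φ_m⁰ = c_m T_0 Π_m T_0† and
Φ_m¹ = (1-c_m) T_1 Π_m T_1† are POVMs on H_B⁽⁰⁾, H_B⁽¹⁾ realizing the Π_m. -/
theorem lemma2_sufficiency
    {HB : Type*} [NormedAddCommGroup HB] [InnerProductSpace ℂ HB] [FiniteDimensional ℂ HB]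
    (M : ℕ)
    (e : Fin 2 → EuclideanSpace ℂ (Fin 2)) (he : Orthonormal ℂ e)
    (η ν : Fin 2 → HB) (pi pip : PiLp 2 (fun _ : Fin 2 => HB))
    (hON : Orthonormal ℂ ![pi, pip])
    (hpi : pi = tp (e 0) (η 0) + tp (e 1) (η 1))
    (hpip : pip = tp (e 0) (ν 0) + tp (e 1) (ν 1))
    (horth : ∀ k : Fin 2, ⟪η k, ν k⟫_ℂ = 0)
    (Pv : Fin M → (PiLp 2 (fun _ : Fin 2 => HB) →ₗ[ℂ] PiLp 2 (fun _ : Fin 2 => HB)))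
    (hrank : ∀ m, ∃ x, x ≠ 0 ∧ x ∈ Submodule.span ℂ {pi, pip} ∧ Pv m = rankOne x x)
    (hsum : ∑ m, Pv m = rankOne pi pi + rankOne pip pip)
    (c : Fin M → ℝ) (hc : ∀ m, 0 ≤ c m ∧ c m ≤ 1)
    (hZ : ∑ m, (c m : ℂ) • Pv m =
      (rankOne pi pi + rankOne pip pip) ∘ₗ opT (outerM (e 0)) LinearMap.id ∘ₗ
        (rankOne pi pi + rankOne pip pip)) :
    -- with T_k = η_k⁻|η_k⟩⟨π| + ν_k⁻|ν_k⟩⟨π⊥| and the coefficients c_m⁽⁰⁾ = c_m,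
    -- c_m⁽¹⁾ = 1 - c_m, the operators Φ_m⁽ᵏ⁾ = c_m⁽ᵏ⁾ T_k Π_m T_k† form POVMs on
    -- span(η_k, ν_k) and realize the Π_m
    (∀ k m, IsPSD
      ((if k = (0 : Fin 2) then ((c m : ℝ) : ℂ) else ((1 - c m : ℝ) : ℂ)) •
        (((((‖η k‖ ^ 2)⁻¹ : ℝ) : ℂ) • rankOne (η k) pi +
            (((‖ν k‖ ^ 2)⁻¹ : ℝ) : ℂ) • rankOne (ν k) pip) ∘ₗ Pv m ∘ₗ
          LinearMap.adjoint ((((‖η k‖ ^ 2)⁻¹ : ℝ) : ℂ) • rankOne (η k) pi +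
            (((‖ν k‖ ^ 2)⁻¹ : ℝ) : ℂ) • rankOne (ν k) pip)))) ∧
    (∀ k m, LinearMap.range
      ((if k = (0 : Fin 2) then ((c m : ℝ) : ℂ) else ((1 - c m : ℝ) : ℂ)) •
        (((((‖η k‖ ^ 2)⁻¹ : ℝ) : ℂ) • rankOne (η k) pi +
            (((‖ν k‖ ^ 2)⁻¹ : ℝ) : ℂ) • rankOne (ν k) pip) ∘ₗ Pv m ∘ₗ
          LinearMap.adjoint ((((‖η k‖ ^ 2)⁻¹ : ℝ) : ℂ) • rankOne (η k) pi +
            (((‖ν k‖ ^ 2)⁻¹ : ℝ) : ℂ) • rankOne (ν k) pip))) ≤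
        Submodule.span ℂ {η k, ν k}) ∧
    (∀ k : Fin 2, ∑ m,
      (if k = (0 : Fin 2) then ((c m : ℝ) : ℂ) else ((1 - c m : ℝ) : ℂ)) •
        (((((‖η k‖ ^ 2)⁻¹ : ℝ) : ℂ) • rankOne (η k) pi +
            (((‖ν k‖ ^ 2)⁻¹ : ℝ) : ℂ) • rankOne (ν k) pip) ∘ₗ Pv m ∘ₗ
          LinearMap.adjoint ((((‖η k‖ ^ 2)⁻¹ : ℝ) : ℂ) • rankOne (η k) pi +
            (((‖ν k‖ ^ 2)⁻¹ : ℝ) : ℂ) • rankOne (ν k) pip)) =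
        projOp (Submodule.span ℂ {η k, ν k})) ∧
    (∀ m, Pv m =
      (rankOne pi pi + rankOne pip pip) ∘ₗ
        (opT (outerM (e 0))
          (((c m : ℝ) : ℂ) •
            (((((‖η 0‖ ^ 2)⁻¹ : ℝ) : ℂ) • rankOne (η 0) pi +
                (((‖ν 0‖ ^ 2)⁻¹ : ℝ) : ℂ) • rankOne (ν 0) pip) ∘ₗ Pv m ∘ₗ
              LinearMap.adjoint ((((‖η 0‖ ^ 2)⁻¹ : ℝ) : ℂ) • rankOne (η 0) pi +
                (((‖ν 0‖ ^ 2)⁻¹ : ℝ) : ℂ) • rankOne (ν 0) pip))) +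
         opT (outerM (e 1))
          (((1 - c m : ℝ) : ℂ) •
            (((((‖η 1‖ ^ 2)⁻¹ : ℝ) : ℂ) • rankOne (η 1) pi +
                (((‖ν 1‖ ^ 2)⁻¹ : ℝ) : ℂ) • rankOne (ν 1) pip) ∘ₗ Pv m ∘ₗ
              LinearMap.adjoint ((((‖η 1‖ ^ 2)⁻¹ : ℝ) : ℂ) • rankOne (η 1) pi +
                (((‖ν 1‖ ^ 2)⁻¹ : ℝ) : ℂ) • rankOne (ν 1) pip)))) ∘ₗ
        (rankOne pi pi + rankOne pip pip)) := by
  choose x _ hxspan hPv using hrank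
  simp only [hPv] at hsum hZ ⊢
  simp only [← pairOp_def]
  have hpi' : pi = ∑ i, tp (e i) (η i) := by rw [Fin.sum_univ_two]; exact hpi
  have hpip' : pip = ∑ i, tp (e i) (ν i) := by rw [Fin.sum_univ_two]; exact hpip
  have hZ0 := hZ.trans (proj_comp_opT_outerM_id_comp_proj he hpi' hpip' (horth 0))
  have hZ1 := sum_one_sub_smul_rankOne_eq he hON hpi' hpip' hsum hZ0
  set d : Fin 2 → Fin M → ℝ := fun k m => if k = 0 then c m else 1 - c m with hd_def
  have hd : ∀ k m, 0 ≤ d k m := fun k m => by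
    simp only [hd_def]; split_ifs <;> linarith [hc m]
  have hZk : ∀ k, ∑ m, (d k m : ℂ) • rankOne (x m) (x m) =
      ((‖η k‖ ^ 2 : ℝ) : ℂ) • rankOne pi pi + ((‖ν k‖ ^ 2 : ℝ) : ℂ) • rankOne pip pip :=
    Fin.forall_fin_two.mpr ⟨hZ0, hZ1⟩
  have hcoe : ∀ k m, (if k = 0 then ((c m : ℝ) : ℂ) else ((1 - c m : ℝ) : ℂ)) = (d k m : ℂ) :=
    fun k m => (apply_ite _ _ _ _).symm
  simp only [hcoe]
  refine ⟨fun k m => ?_, fun k m => ?_, fun k => ?_, fun m => ?_⟩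
  · rw [comp_rankOne_comp_adjoint]
    exact isPSD_ofReal_smul_rankOne_self (hd k m) _
  · exact (LinearMap.range_smul_le_range _ _).trans
      ((LinearMap.range_comp_le_range _ _).trans range_pairOp_le)
  · rw [sum_smul_comp_comp, hZk k, pairOp_comp_comp_adjoint (horth k) hON]
  · rw [comp_add_comp,
      proj_comp_opT_outerM_comp_proj he hON hpi' hpip' (horth 0) hxspan (fun m => (hc m).1) hZ0,
      proj_comp_opT_outerM_comp_proj he hON hpi' hpip' (horth 1) hxspan
        (fun m => sub_nonneg.2 (hc m).2) hZ1,
      ← add_smul, ← Complex.ofReal_add, add_sub_cancel, Complex.ofReal_one, one_smul]
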